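/- Let k be a field, n a positive integer, and G a subgroup of the symmetric group S_n, acting on the polynomial ring k[x_1,...,x_n] by permuting the variables. Let P = ∏_{i>j, (i j)∈G} (x_i − x_j), the product over all pairs i > j such that the transposition (i j) lies in G. Then for every σ ∈ G, the polynomial σ·P equals P or −P. -/

import Mathlib

open MvPolynomial

open scoped Classical

/-- The polynomial `P = ∏_{i > j, (i j) ∈ G} (x_i − x_j)`. -/
noncomputable def permProd (k : Type*) [Field k] (n : ℕ)
    (G : Subgroup (Equiv.Perm (Fin n))) : MvPolynomial (Fin n) k :=
  ∏ p ∈ Finset.univ.filter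
      (fun p : Fin n × Fin n => p.2 < p.1 ∧ Equiv.swap p.1 p.2 ∈ G),
    (X p.1 - X p.2)

/-- For every `σ ∈ G`, `σ · P = P` or `σ · P = −P`. -/
theorem stmt0 (k : Type*) [Field k] (n : ℕ) (hn : 0 < n)
    (G : Subgroup (Equiv.Perm (Fin n))) (σ : Equiv.Perm (Fin n)) (hσ : σ ∈ G) :
    rename (⇑σ) (permProd k n G) = permProd k n G ∨
      rename (⇑σ) (permProd k n G) = -permProd k n G := by
  classical
  set s := Finset.univ.filter
      (fun p : Fin n × Fin n => p.2 < p.1 ∧ Equiv.swap p.1 p.2 ∈ G) with hs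
  set e : Fin n × Fin n → Fin n × Fin n := fun p =>
    if σ p.2 < σ p.1 then (σ p.1, σ p.2) else (σ p.2, σ p.1) with he
  set d : Fin n × Fin n → Fin n × Fin n := fun q =>
    if σ⁻¹ q.2 < σ⁻¹ q.1 then (σ⁻¹ q.1, σ⁻¹ q.2) else (σ⁻¹ q.2, σ⁻¹ q.1) with hd
  have hes : ∀ p ∈ s, e p ∈ s := by
    intro p hp
    simp only [hs, Finset.mem_filter, Finset.mem_univ, true_and] at hp ⊢
    obtain ⟨hlt, hg⟩ := hp
    have hne : σ p.1 ≠ σ p.2 := fun h => hlt.ne (σ.injective h).symm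
    have hg' : Equiv.swap (σ p.1) (σ p.2) ∈ G := by
      rw [Equiv.swap_apply_apply]
      exact G.mul_mem (G.mul_mem hσ hg) (G.inv_mem hσ)
    simp only [he]
    rcases lt_or_gt_of_ne hne with h | h
    · rw [if_neg (not_lt.mpr h.le)]
      exact ⟨h, Equiv.swap_comm (σ p.1) (σ p.2) ▸ hg'⟩
    · rw [if_pos h]; exact ⟨h, hg'⟩
  have hds : ∀ q ∈ s, d q ∈ s := by
    intro q hq
    simp only [hs, Finset.mem_filter, Finset.mem_univ, true_and] at hq ⊢
    obtain ⟨hlt, hg⟩ := hq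
    have hne : σ⁻¹ q.1 ≠ σ⁻¹ q.2 := fun h => hlt.ne ((σ⁻¹).injective h).symm
    have hg' : Equiv.swap (σ⁻¹ q.1) (σ⁻¹ q.2) ∈ G := by
      rw [Equiv.swap_apply_apply]
      exact G.mul_mem (G.mul_mem (G.inv_mem hσ) hg) (G.inv_mem (G.inv_mem hσ))
    simp only [hd]
    rcases lt_or_gt_of_ne hne with h | h
    · rw [if_neg (not_lt.mpr h.le)]
      exact ⟨h, Equiv.swap_comm (σ⁻¹ q.1) (σ⁻¹ q.2) ▸ hg'⟩
    · rw [if_pos h]; exact ⟨h, hg'⟩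
  have hde : ∀ p ∈ s, d (e p) = p := by
    intro p hp
    simp only [hs, Finset.mem_filter, Finset.mem_univ, true_and] at hp
    obtain ⟨hlt, -⟩ := hp
    simp only [he, hd]
    by_cases h : σ p.2 < σ p.1
    · rw [if_pos h]
      simp [Equiv.Perm.inv_def, Equiv.symm_apply_apply, hlt]
    · rw [if_neg h]
      simp only [Equiv.Perm.inv_def, Equiv.symm_apply_apply]
      rw [if_neg (not_lt.mpr hlt.le)]
  have hed : ∀ q ∈ s, e (d q) = q := by
    intro q hq
    simp only [hs, Finset.mem_filter, Finset.mem_univ, true_and] at hq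
    obtain ⟨hlt, -⟩ := hq
    simp only [he, hd]
    by_cases h : σ⁻¹ q.2 < σ⁻¹ q.1
    · rw [if_pos h]
      simp [Equiv.Perm.inv_def, Equiv.apply_symm_apply, hlt]
    · rw [if_neg h]
      simp only [Equiv.Perm.inv_def, Equiv.apply_symm_apply]
      rw [if_neg (not_lt.mpr hlt.le)]
  have key : rename (⇑σ) (permProd k n G)
      = (∏ p ∈ s, (if σ p.2 < σ p.1 then (1 : MvPolynomial (Fin n) k) else -1))
        * permProd k n G := by
    have h1 : rename (⇑σ) (permProd k n G)
        = ∏ p ∈ s, ((if σ p.2 < σ p.1 then (1 : MvPolynomial (Fin n) k) else -1)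
            * (X (e p).1 - X (e p).2)) := by
      rw [permProd, map_prod]
      refine Finset.prod_congr rfl ?_
      intro p hp
      simp only [map_sub, rename_X, he]
      by_cases h : σ p.2 < σ p.1
      · rw [if_pos h, if_pos h, one_mul]
      · rw [if_neg h, if_neg h, neg_one_mul, neg_sub]
    rw [h1, Finset.prod_mul_distrib]
    congr 1
    rw [permProd, ← hs]
    exact Finset.prod_nbij' e d hes hds hde hed (fun p _ => rfl)
  have hsign : (∏ p ∈ s, (if σ p.2 < σ p.1 then (1 : MvPolynomial (Fin n) k) else -1)) = 1
      ∨ (∏ p ∈ s, (if σ p.2 < σ p.1 then (1 : MvPolynomial (Fin n) k) else -1)) = -1 := by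
    refine Finset.prod_induction _ (fun x => x = 1 ∨ x = -1) ?_ (Or.inl rfl) ?_
    · rintro a b (rfl | rfl) (rfl | rfl) <;> simp
    · intro p _
      by_cases h : σ p.2 < σ p.1 <;> simp [h]
  rcases hsign with h | h
  · left; rw [key, h, one_mul]
  · right; rw [key, h, neg_one_mul]
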